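/- Let S be a non-discrete locally compact semitopological polycyclic monoid with finite generating set Λ, and let U₀ be a compact neighborhood of the zero 0 in S. Then for every x ∈ S, the neighborhood U₀ contains all but finitely many elements of the Green R-class R_x. -/

import Mathlib

/-- A polycyclic monoid: an inverse monoid `S` with a two-sided zero `0 ≠ 1`
(encoded via `MonoidWithZero`), with inversion `inv` (the unique inverse
in the sense of inverse semigroups), generated (as a semigroup) by a set `Λ`
with `x * inv x = 1` for `x ∈ Λ` and `x * inv y = 0` for distinct `x, y ∈ Λ`. -/
structure IsPolycyclicMonoid (S : Type*) [MonoidWithZero S] (inv : S → S) (Λ : Set S) : Prop where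
  inv_inverse : ∀ a : S, a * inv a * a = a ∧ inv a * a * inv a = inv a
  inv_unique : ∀ a b : S, a * b * a = a → b * a * b = b → b = inv a
  zero_ne_one : (0 : S) ≠ 1
  gen_unit : ∀ x ∈ Λ, x * inv x = 1
  gen_zero : ∀ x ∈ Λ, ∀ y ∈ Λ, x ≠ y → x * inv y = 0
  generates : Subsemigroup.closure (Λ ∪ inv '' Λ) = ⊤

/-- The Green `R`-class of `u`: the set of `x` with `xS = uS`. -/
def greenR {S : Type*} [Mul S] (u : S) : Set S :=
  {x | {t | ∃ s, t = x * s} = {t | ∃ s, t = u * s}}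

namespace PolyAux

variable {S : Type*} [MonoidWithZero S]

/-- product of a word, head = "active end" (last-multiplied letter). -/
def posW : List S → S
  | [] => 1
  | c :: w => posW w * c

def negW (inv : S → S) : List S → S
  | [] => 1
  | c :: w => inv c * negW inv w

/-- `w` is a word over the alphabet `Λ`. -/
def LW (Λ : Set S) (w : List S) : Prop := ∀ c ∈ w, c ∈ Λ

variable {inv : S → S} {Λ : Set S}

lemma LW.nil : LW Λ ([] : List S) := by intro c hc; simp at hc

lemma LW.cons {c : S} {w : List S} (hc : c ∈ Λ) (hw : LW Λ w) : LW Λ (c :: w) := by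
  intro d hd; rcases List.mem_cons.1 hd with h | h
  · exact h ▸ hc
  · exact hw d h

lemma LW.of_cons {c : S} {w : List S} (h : LW Λ (c :: w)) : c ∈ Λ ∧ LW Λ w :=
  ⟨h c List.mem_cons_self, fun d hd => h d (List.mem_cons_of_mem c hd)⟩

lemma LW.append {v w : List S} (hv : LW Λ v) (hw : LW Λ w) : LW Λ (v ++ w) := by
  intro c hc; rcases List.mem_append.1 hc with h | h
  · exact hv c h
  · exact hw c h

lemma LW.of_append {v w : List S} (h : LW Λ (v ++ w)) : LW Λ v ∧ LW Λ w :=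
  ⟨fun c hc => h c (List.mem_append.2 (Or.inl hc)), fun c hc => h c (List.mem_append.2 (Or.inr hc))⟩

@[simp] lemma posW_nil : posW ([] : List S) = 1 := rfl
@[simp] lemma posW_cons (c : S) (w : List S) : posW (c :: w) = posW w * c := rfl
@[simp] lemma negW_nil : negW inv ([] : List S) = 1 := rfl
@[simp] lemma negW_cons (c : S) (w : List S) : negW inv (c :: w) = inv c * negW inv w := rfl

lemma posW_append (u v : List S) : posW (u ++ v) = posW v * posW u := by
  induction u with
  | nil => simp
  | cons c u ih => simp [ih, mul_assoc]

lemma negW_append (u v : List S) : negW inv (u ++ v) = negW inv u * negW inv v := by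
  induction u with
  | nil => simp
  | cons c u ih => simp [ih, mul_assoc]

variable (hS : IsPolycyclicMonoid S inv Λ)
include hS

lemma pn {w : List S} (hw : LW Λ w) : posW w * negW inv w = 1 := by
  induction w with
  | nil => simp
  | cons c w ih =>
    obtain ⟨hc, hw'⟩ := hw.of_cons
    calc posW (c :: w) * negW inv (c :: w)
        = posW w * (c * inv c) * negW inv w := by simp [mul_assoc]
      _ = 1 := by rw [hS.gen_unit c hc, mul_one, ih hw']

lemma pn' {w : List S} (hw : LW Λ w) (x : S) : posW w * (negW inv w * x) = x := by
  rw [← mul_assoc, pn hS hw, one_mul]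

/-- the dichotomy for middle products. -/
lemma dich : ∀ q r : List S, LW Λ q → LW Λ r →
    (∃ w, q = r ++ w ∧ posW q * negW inv r = posW w) ∨
    (∃ w, r = q ++ w ∧ posW q * negW inv r = negW inv w) ∨
    posW q * negW inv r = (0 : S) := by
  intro q
  induction q with
  | nil =>
    intro r _ _
    exact Or.inr (Or.inl ⟨r, by simp⟩)
  | cons c q ih =>
    intro r hq hr
    obtain ⟨hc, hq'⟩ := hq.of_cons
    cases r with
    | nil => exact Or.inl ⟨c :: q, by simp⟩
    | cons d r =>
      obtain ⟨hd, hr'⟩ := hr.of_cons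
      by_cases hcd : c = d
      · subst hcd
        have key : posW (c :: q) * negW inv (c :: r) = posW q * negW inv r := by
          calc posW (c :: q) * negW inv (c :: r)
              = posW q * ((c * inv c) * negW inv r) := by simp [mul_assoc]
            _ = posW q * negW inv r := by rw [hS.gen_unit c hc, one_mul]
        rcases ih r hq' hr' with ⟨w, h1, h2⟩ | ⟨w, h1, h2⟩ | h
        · exact Or.inl ⟨w, by simp [h1], by rw [key, h2]⟩
        · exact Or.inr (Or.inl ⟨w, by simp [h1], by rw [key, h2]⟩)
        · exact Or.inr (Or.inr (by rw [key, h]))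
      · refine Or.inr (Or.inr ?_)
        calc posW (c :: q) * negW inv (d :: r)
            = posW q * ((c * inv d) * negW inv r) := by simp [mul_assoc]
          _ = 0 := by rw [hS.gen_zero c hc d hd hcd, zero_mul, mul_zero]

lemma np_ne_zero {p q : List S} (hp : LW Λ p) (hq : LW Λ q) :
    negW inv p * posW q ≠ (0 : S) := by
  intro h
  have : posW p * (negW inv p * posW q) * negW inv q = posW p * (0:S) * negW inv q := by rw [h]
  rw [pn' hS hp, pn hS hq, mul_zero, zero_mul] at this
  exact hS.zero_ne_one this.symm

lemma exists_pair : ∃ a ∈ Λ, ∃ b ∈ Λ, a ≠ b := by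
  by_contra h
  push_neg at h
  -- all letters of Λ are equal; then words are comparable and 0 is not a product
  have comp : ∀ q r : List S, LW Λ q → LW Λ r → (∃ w, q = r ++ w) ∨ (∃ w, r = q ++ w) := by
    intro q
    induction q with
    | nil => intro r _ _; exact Or.inr ⟨r, by simp⟩
    | cons c q ih =>
      intro r hq hr
      obtain ⟨hc, hq'⟩ := hq.of_cons
      cases r with
      | nil => exact Or.inl ⟨c :: q, by simp⟩
      | cons d r =>
        obtain ⟨hd, hr'⟩ := hr.of_cons
        have hcd : c = d := h c hc d hd
        subst hcd
        rcases ih r hq' hr' with ⟨w, h1⟩ | ⟨w, h1⟩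
        · exact Or.inl ⟨w, by simp [h1]⟩
        · exact Or.inr ⟨w, by simp [h1]⟩
  set K : Subsemigroup S :=
    { carrier := {x | ∃ p q, LW Λ p ∧ LW Λ q ∧ x = negW inv p * posW q}
      mul_mem' := by
        rintro a b ⟨p, q, hp, hq, rfl⟩ ⟨r, s, hr, hs, rfl⟩
        rcases comp q r hq hr with ⟨w, h1⟩ | ⟨w, h1⟩
        · -- q = r ++ w
          have hw : LW Λ w := (h1 ▸ hq).of_append.2
          refine ⟨p, s ++ w, hp, hs.append hw, ?_⟩
          have : posW q * negW inv r = posW w := by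
            rw [h1, posW_append, mul_assoc, pn hS hr, mul_one]
          calc negW inv p * posW q * (negW inv r * posW s)
              = negW inv p * ((posW q * negW inv r) * posW s) := by
                rw [mul_assoc, mul_assoc]
            _ = negW inv p * posW (s ++ w) := by rw [this, posW_append]
        · -- r = q ++ w
          have hw : LW Λ w := (h1 ▸ hr).of_append.2
          refine ⟨p ++ w, s, hp.append hw, hs, ?_⟩
          have : posW q * negW inv r = negW inv w := by
            rw [h1, negW_append, pn' hS hq]
          calc negW inv p * posW q * (negW inv r * posW s)
              = negW inv p * ((posW q * negW inv r) * posW s) := by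
                rw [mul_assoc, mul_assoc]
            _ = negW inv (p ++ w) * posW s := by rw [this, negW_append, mul_assoc]
    }
  have hKgen : Λ ∪ inv '' Λ ⊆ K := by
    rintro x (hx | ⟨c, hc, rfl⟩)
    · exact ⟨[], [x], LW.nil, LW.cons hx LW.nil, by simp⟩
    · exact ⟨[c], [], LW.cons hc LW.nil, LW.nil, by simp⟩
  have h0 : (0 : S) ∈ K := by
    have := hS.generates
    have : (0 : S) ∈ Subsemigroup.closure (Λ ∪ inv '' Λ) := by
      rw [this]; exact Subsemigroup.mem_top 0
    exact Subsemigroup.closure_le.2 hKgen this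
  obtain ⟨p, q, hp, hq, hpq⟩ := h0
  exact np_ne_zero hS hp hq hpq.symm

end PolyAux

-- continuation: uniqueness lemmas
namespace PolyAux

set_option linter.unusedSectionVars false

variable {S : Type*} [MonoidWithZero S] {inv : S → S} {Λ : Set S}
variable (hS : IsPolycyclicMonoid S inv Λ)
include hS

lemma exists_other {c : S} (hc : c ∈ Λ) : ∃ d ∈ Λ, d ≠ c := by
  obtain ⟨a, ha, b, hb, hab⟩ := exists_pair hS
  by_cases h : a = c
  · exact ⟨b, hb, by rw [← h]; exact fun e => hab e.symm⟩
  · exact ⟨a, ha, h⟩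

lemma pos_eq_one {w : List S} (hw : LW Λ w) (h : posW w = (1 : S)) : w = [] := by
  cases w with
  | nil => rfl
  | cons c w' =>
    exfalso
    obtain ⟨hc, hw'⟩ := hw.of_cons
    -- negW w = inv (posW w) = inv 1 = 1
    have h1 : negW inv (c :: w') = inv (posW (c :: w')) := by
      apply hS.inv_unique
      · rw [pn hS hw, one_mul]
      · rw [mul_assoc, pn hS hw, mul_one]
    have hinv1 : (1 : S) = inv 1 := hS.inv_unique 1 1 (by simp) (by simp)
    rw [h, ← hinv1] at h1
    obtain ⟨d, hd, hdc⟩ := exists_other hS hc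
    have h2 : d * negW inv (c :: w') = d := by rw [h1, mul_one]
    have h3 : d * negW inv (c :: w') = 0 := by
      rw [negW_cons, ← mul_assoc, hS.gen_zero d hd c hc hdc, zero_mul]
    have hd0 : d = (0 : S) := by rw [← h2, h3]
    have : (1 : S) = 0 := by rw [← hS.gen_unit d hd, hd0, zero_mul]
    exact hS.zero_ne_one this.symm

lemma neg_eq_one {w : List S} (hw : LW Λ w) (h : negW inv w = (1 : S)) : w = [] := by
  apply pos_eq_one hS hw
  have := pn hS hw
  rw [h, mul_one] at this
  exact this

lemma np_eq_one {w : List S} (hw : LW Λ w) (h : negW inv w * posW w = (1 : S)) : w = [] := by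
  cases w with
  | nil => rfl
  | cons c w' =>
    exfalso
    obtain ⟨hc, hw'⟩ := hw.of_cons
    obtain ⟨d, hd, hdc⟩ := exists_other hS hc
    have h2 : d * (negW inv (c :: w') * posW (c :: w')) = d := by rw [h, mul_one]
    have h3 : d * (negW inv (c :: w') * posW (c :: w')) = 0 := by
      rw [negW_cons, mul_assoc (inv c), ← mul_assoc d, hS.gen_zero d hd c hc hdc, zero_mul]
    have hd0 : d = (0 : S) := by rw [← h2, h3]
    have : (1 : S) = 0 := by rw [← hS.gen_unit d hd, hd0, zero_mul]
    exact hS.zero_ne_one this.symm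

lemma pn_eq_one {q r : List S} (hq : LW Λ q) (hr : LW Λ r)
    (h : posW q * negW inv r = (1 : S)) : q = r := by
  rcases dich hS q r hq hr with ⟨w, h1, h2⟩ | ⟨w, h1, h2⟩ | h0
  · have : w = [] := pos_eq_one hS ((h1 ▸ hq).of_append.2) (by rw [← h2, h])
    rw [h1, this, List.append_nil]
  · have : w = [] := neg_eq_one hS ((h1 ▸ hr).of_append.2) (by rw [← h2, h])
    rw [h1, this, List.append_nil]
  · rw [h] at h0; exact absurd h0.symm hS.zero_ne_one

lemma np_eq_one' {w y : List S} (hw : LW Λ w) (hy : LW Λ y)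
    (h : negW inv w * posW y = (1 : S)) : w = [] ∧ y = [] := by
  have hpy : posW y = posW w := by
    have := congrArg (fun x => posW w * x) h
    simp only [mul_one] at this
    rw [← mul_assoc, pn hS hw, one_mul] at this
    exact this
  have hw0 : w = [] := by
    apply np_eq_one hS hw
    rw [← hpy]
    exact h
  refine ⟨hw0, ?_⟩
  rw [hw0] at h
  simp only [negW_nil, one_mul] at h
  exact pos_eq_one hS hy h

/-- uniqueness of normal forms -/
lemma nf_unique {p q p' q' : List S} (hp : LW Λ p) (hq : LW Λ q) (hp' : LW Λ p') (hq' : LW Λ q')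
    (E : negW inv p * posW q = negW inv p' * posW q') : p = p' ∧ q = q' := by
  have h1 : posW p * ((negW inv p * posW q) * negW inv q) = 1 := by
    rw [← mul_assoc, pn' hS hp, pn hS hq]
  rw [E] at h1
  have key : (posW p * negW inv p') * (posW q' * negW inv q) = 1 := by
    calc (posW p * negW inv p') * (posW q' * negW inv q)
        = posW p * ((negW inv p' * posW q') * negW inv q) := by simp only [mul_assoc]
      _ = 1 := h1
  rcases dich hS p p' hp hp' with ⟨w, hw1, hw2⟩ | ⟨w, hw1, hw2⟩ | h0
  · -- p = p' ++ w, A = posW w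
    have hwΛ : LW Λ w := (hw1 ▸ hp).of_append.2
    rcases dich hS q' q hq' hq with ⟨v, hv1, hv2⟩ | ⟨v, hv1, hv2⟩ | h0'
    · -- q' = q ++ v, B = posW v
      rw [hw2, hv2, ← posW_append] at key
      have hvΛ : LW Λ v := (hv1 ▸ hq').of_append.2
      have hve := pos_eq_one hS (hvΛ.append hwΛ) key
      have hv0 : v = [] := by cases v with | nil => rfl | cons a l => simp at hve
      have hw0 : w = [] := by rw [hv0] at hve; simpa using hve
      constructor
      · rw [hw1, hw0, List.append_nil]
      · rw [hv1, hv0, List.append_nil]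
    · -- q = q' ++ v, B = negW v : posW w * negW v = 1 so w = v; then sandwich
      rw [hw2, hv2] at key
      have hvΛ : LW Λ v := (hv1 ▸ hq).of_append.2
      have hwv : w = v := pn_eq_one hS hwΛ hvΛ key
      rw [← hwv] at hv1
      have lhs : posW p' * ((negW inv p * posW q) * negW inv q') = negW inv w * posW w := by
        rw [hw1, hv1, negW_append, posW_append]
        simp only [mul_assoc]
        rw [pn' hS hp', pn hS hq', mul_one]
      have rhs : posW p' * ((negW inv p' * posW q') * negW inv q') = 1 := by
        rw [← mul_assoc, pn' hS hp', pn hS hq']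
      rw [E] at lhs
      have h2 : negW inv w * posW w = 1 := lhs.symm.trans rhs
      have hw0 : w = [] := np_eq_one hS hwΛ h2
      subst hw0
      exact ⟨by rw [hw1, List.append_nil], by rw [hv1, List.append_nil]⟩
    · rw [hw2, h0', mul_zero] at key
      exact absurd key hS.zero_ne_one
  · -- p' = p ++ w, A = negW w
    have hwΛ : LW Λ w := (hw1 ▸ hp').of_append.2
    rcases dich hS q' q hq' hq with ⟨v, hv1, hv2⟩ | ⟨v, hv1, hv2⟩ | h0'
    · rw [hw2, hv2] at key
      have hvΛ : LW Λ v := (hv1 ▸ hq').of_append.2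
      obtain ⟨hw0, hv0⟩ := np_eq_one' hS hwΛ hvΛ key
      subst hw0; subst hv0
      exact ⟨by rw [hw1, List.append_nil], by rw [hv1, List.append_nil]⟩
    · rw [hw2, hv2, ← negW_append] at key
      have hvΛ : LW Λ v := (hv1 ▸ hq).of_append.2
      have hwe := neg_eq_one hS (hwΛ.append hvΛ) key
      have hw0 : w = [] := by cases w with | nil => rfl | cons a l => simp at hwe
      have hv0 : v = [] := by rw [hw0] at hwe; simpa using hwe
      subst hw0; subst hv0
      exact ⟨by rw [hw1, List.append_nil], by rw [hv1, List.append_nil]⟩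
    · rw [hw2, h0', mul_zero] at key
      exact absurd key hS.zero_ne_one
  · rw [h0, zero_mul] at key
    exact absurd key hS.zero_ne_one

end PolyAux

namespace PolyAux

set_option linter.unusedSectionVars false

variable {S : Type*} [MonoidWithZero S] {inv : S → S} {Λ : Set S}
variable (hS : IsPolycyclicMonoid S inv Λ)
include hS

/-- every element is zero or has a normal form -/
lemma decompose (x : S) : x = 0 ∨ ∃ p q, LW Λ p ∧ LW Λ q ∧ x = negW inv p * posW q := by
  set K : Subsemigroup S :=
    { carrier := {x : S | x = 0 ∨ ∃ p q, LW Λ p ∧ LW Λ q ∧ x = negW inv p * posW q}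
      mul_mem' := by
        rintro a b (rfl | ⟨p, q, hp, hq, rfl⟩) hb
        · rcases hb with rfl | ⟨r, s, hr, hs, rfl⟩ <;> exact Or.inl (by simp)
        · rcases hb with rfl | ⟨r, s, hr, hs, rfl⟩
          · exact Or.inl (by simp)
          · rcases dich hS q r hq hr with ⟨w, h1, h2⟩ | ⟨w, h1, h2⟩ | h0
            · refine Or.inr ⟨p, s ++ w, hp, (hs.append ((h1 ▸ hq).of_append.2)), ?_⟩
              calc negW inv p * posW q * (negW inv r * posW s)
                  = negW inv p * ((posW q * negW inv r) * posW s) := by simp only [mul_assoc]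
                _ = negW inv p * posW (s ++ w) := by rw [h2, posW_append]
            · refine Or.inr ⟨p ++ w, s, (hp.append ((h1 ▸ hr).of_append.2)), hs, ?_⟩
              calc negW inv p * posW q * (negW inv r * posW s)
                  = negW inv p * ((posW q * negW inv r) * posW s) := by simp only [mul_assoc]
                _ = negW inv (p ++ w) * posW s := by
                    rw [h2, negW_append, mul_assoc]
            · refine Or.inl ?_
              calc negW inv p * posW q * (negW inv r * posW s)
                  = negW inv p * ((posW q * negW inv r) * posW s) := by simp only [mul_assoc]
                _ = 0 := by rw [h0, zero_mul, mul_zero]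
    }
  have hx : x ∈ Subsemigroup.closure (Λ ∪ inv '' Λ) := by
    rw [hS.generates]; exact Subsemigroup.mem_top x
  have hK : x ∈ K := by
    refine Subsemigroup.closure_le.2 ?_ hx
    rintro y (hy | ⟨c, hc, rfl⟩)
    · exact Or.inr ⟨[], [y], LW.nil, LW.cons hy LW.nil, by simp⟩
    · exact Or.inr ⟨[c], [], LW.cons hc LW.nil, LW.nil, by simp⟩
  exact hK

lemma green_zero {y : S} (hy : y ∈ greenR (0 : S)) : y = 0 := by
  have h1 : y ∈ {t : S | ∃ s, t = y * s} := ⟨1, (mul_one y).symm⟩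
  have h2 : y ∈ {t : S | ∃ s, t = (0 : S) * s} := hy ▸ h1
  obtain ⟨s, hs⟩ := h2
  rw [hs, zero_mul]

/-- elements of the R-class of `negW p * posW q` all have the form `negW p * posW w`. -/
lemma green_form {p q : List S} (hp : LW Λ p) (hq : LW Λ q) {y : S}
    (hy : y ∈ greenR (negW inv p * posW q)) : ∃ w, LW Λ w ∧ y = negW inv p * posW w := by
  set x := negW inv p * posW q with hxdef
  have hsets : {t : S | ∃ s, t = y * s} = {t : S | ∃ s, t = x * s} := hy
  have hxy : ∃ s₀, x = y * s₀ := by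
    have : x ∈ {t : S | ∃ s, t = x * s} := ⟨1, (mul_one x).symm⟩
    rw [← hsets] at this; exact this
  have hyx : ∃ s₁, y = x * s₁ := by
    have : y ∈ {t : S | ∃ s, t = y * s} := ⟨1, (mul_one y).symm⟩
    rw [hsets] at this; exact this
  obtain ⟨s₀, hs₀⟩ := hxy
  obtain ⟨s₁, hs₁⟩ := hyx
  have hxne : x ≠ 0 := np_ne_zero hS hp hq
  have hyne : y ≠ 0 := by
    intro h; rw [h, zero_mul] at hs₀; exact hxne hs₀
  rcases decompose hS s₁ with rfl | ⟨r, s, hr, hs, rfl⟩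
  · rw [mul_zero] at hs₁; exact absurd hs₁ hyne
  rcases dich hS q r hq hr with ⟨w, h1, h2⟩ | ⟨w, h1, h2⟩ | h0
  · -- y = negW p * posW (s ++ w)
    refine ⟨s ++ w, hs.append ((h1 ▸ hq).of_append.2), ?_⟩
    rw [hs₁, hxdef]
    calc negW inv p * posW q * (negW inv r * posW s)
        = negW inv p * ((posW q * negW inv r) * posW s) := by simp only [mul_assoc]
      _ = negW inv p * posW (s ++ w) := by rw [h2, posW_append]
  · -- y = negW (p ++ w) * posW s ; then use x = y * s₀ to force w = []
    have hwΛ : LW Λ w := (h1 ▸ hr).of_append.2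
    have hyform : y = negW inv (p ++ w) * posW s := by
      rw [hs₁, hxdef]
      calc negW inv p * posW q * (negW inv r * posW s)
          = negW inv p * ((posW q * negW inv r) * posW s) := by simp only [mul_assoc]
        _ = negW inv (p ++ w) * posW s := by rw [h2, negW_append, mul_assoc]
    rcases decompose hS s₀ with rfl | ⟨r', s', hr', hs', rfl⟩
    · rw [mul_zero] at hs₀; exact absurd hs₀ hxne
    have hx2 : x = negW inv (p ++ w) * (posW s * (negW inv r' * posW s')) := by
      rw [hs₀, hyform, mul_assoc]
    have hw0 : w = [] := by
      rcases dich hS s r' hs hr' with ⟨v, hv1, hv2⟩ | ⟨v, hv1, hv2⟩ | h0'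
      · -- x = negW (p++w) * posW (s' ++ v)
        have : x = negW inv (p ++ w) * posW (s' ++ v) := by
          rw [hx2, ← mul_assoc (posW s), hv2, ← posW_append]
        have := nf_unique hS hp hq (hp.append hwΛ) (hs'.append ((hv1 ▸ hs).of_append.2)) this
        have hplen := congrArg List.length this.1
        simp at hplen
        exact hplen
      · -- x = negW (p++w++v) * posW s'
        have hvΛ : LW Λ v := (hv1 ▸ hr').of_append.2
        have : x = negW inv ((p ++ w) ++ v) * posW s' := by
          rw [hx2, ← mul_assoc (posW s), hv2, negW_append (p++w) v]
          simp only [mul_assoc]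
        have := nf_unique hS hp hq ((hp.append hwΛ).append hvΛ) hs' this
        have hplen := congrArg List.length this.1
        simp at hplen
        exact hplen.1
      · exfalso
        apply hxne
        rw [hx2, ← mul_assoc (posW s), h0', zero_mul, mul_zero]
    refine ⟨s, hs, ?_⟩
    rw [hyform, hw0, List.append_nil]
  · exfalso
    apply hyne
    rw [hs₁, hxdef]
    calc negW inv p * posW q * (negW inv r * posW s)
        = negW inv p * ((posW q * negW inv r) * posW s) := by simp only [mul_assoc]
      _ = 0 := by rw [h0, zero_mul, mul_zero]

end PolyAux

namespace PolyAux

set_option linter.unusedSectionVars false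

open Filter Topology Set

variable {S : Type*} [MonoidWithZero S] {inv : S → S} {Λ : Set S}
variable (hS : IsPolycyclicMonoid S inv Λ)
include hS

lemma ic_ne_one {c : S} (hc : c ∈ Λ) : inv c * c ≠ 1 := by
  intro h
  have h2 : negW inv [c] * posW [c] = (1 : S) := by
    simp only [negW_cons, negW_nil, posW_cons, posW_nil, mul_one, one_mul]
    exact h
  have := np_eq_one hS (LW.cons hc LW.nil) h2
  simp at this

variable [TopologicalSpace S] [T2Space S]

lemma one_isolated (hΛ : Λ.Finite)
    (hl : ∀ a : S, Continuous (fun x : S => a * x))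
    (hr : ∀ a : S, Continuous (fun x : S => x * a)) : 𝓝[≠] (1 : S) = ⊥ := by
  by_contra hne
  have hNB : (𝓝[≠] (1 : S)).NeBot := ⟨hne⟩
  set G := Ultrafilter.of (𝓝[≠] (1 : S)) with hGdef
  have hG : (G : Filter S) ≤ 𝓝[≠] (1 : S) := Ultrafilter.of_le _
  have hG1 : (G : Filter S) ≤ 𝓝 (1 : S) := hG.trans nhdsWithin_le_nhds
  -- the points ≠ 0, 1 are covered by finitely many cells
  have hA : {x : S | x ≠ 0 ∧ x ≠ 1} ∈ G := by
    have h0 : {x : S | x ≠ 0} ∈ 𝓝 (1 : S) :=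
      IsOpen.mem_nhds isOpen_ne (fun h => hS.zero_ne_one h.symm)
    have h1 : {x : S | x ≠ 1} ∈ 𝓝[≠] (1 : S) := by
      rw [← Set.compl_singleton_eq]
      exact self_mem_nhdsWithin
    have h0' : {x : S | x ≠ 0} ∈ G := hG1 h0
    have h1' : {x : S | x ≠ 1} ∈ G := hG h1
    exact Filter.inter_mem h0' h1'
  set cellA : S → Set S := fun d =>
    {x | ∃ r t, LW Λ r ∧ LW Λ t ∧ x = negW inv r * posW (d :: t)} with hcellA
  set cellB : S → Set S := fun c =>
    {x | ∃ r, LW Λ (c :: r) ∧ x = negW inv (c :: r)} with hcellB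
  have hcover : {x : S | x ≠ 0 ∧ x ≠ 1} ⊆ ⋃ c ∈ Λ, (cellA c ∪ cellB c) := by
    rintro x ⟨hx0, hx1⟩
    rcases decompose hS x with rfl | ⟨p, q, hp, hq, rfl⟩
    · exact absurd rfl hx0
    cases q with
    | cons d t =>
      obtain ⟨hd, ht⟩ := hq.of_cons
      exact Set.mem_biUnion hd (Or.inl ⟨p, t, hp, ht, rfl⟩)
    | nil =>
      cases p with
      | nil => exact absurd (by simp) hx1
      | cons c r =>
        refine Set.mem_biUnion (hp.of_cons).1 (Or.inr ⟨r, hp, ?_⟩)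
        simp
  have hUmem : (⋃ c ∈ Λ, (cellA c ∪ cellB c)) ∈ G := Filter.mem_of_superset hA hcover
  obtain ⟨c, hc, hcell⟩ := (Ultrafilter.finite_biUnion_mem_iff hΛ).1 hUmem
  rcases Ultrafilter.union_mem_iff.1 hcell with hmem | hmem
  · -- cellA c ∈ G
    have t1 : Tendsto (fun x : S => x * inv c) (G : Filter S) (𝓝 (inv c)) := by
      have h := (hr (inv c)).tendsto (1 : S)
      rw [one_mul] at h
      exact h.mono_left hG1
    have t2 : Tendsto (fun x : S => (x * inv c) * c) (G : Filter S) (𝓝 (inv c * c)) :=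
      ((hr c).tendsto (inv c)).comp t1
    have heq : (fun x : S => (x * inv c) * c) =ᶠ[(G : Filter S)] id := by
      filter_upwards [hmem] with x hx
      obtain ⟨r, t, hrΛ, htΛ, rfl⟩ := hx
      show negW inv r * posW (c :: t) * inv c * c = negW inv r * posW (c :: t)
      simp only [posW_cons, mul_assoc]
      rw [← mul_assoc c, hS.gen_unit c hc, one_mul]
    have t3 : Tendsto (id : S → S) (G : Filter S) (𝓝 (inv c * c)) := t2.congr' heq
    have t4 : Tendsto (id : S → S) (G : Filter S) (𝓝 (1 : S)) := Filter.tendsto_id'.2 hG1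
    exact ic_ne_one hS hc (tendsto_nhds_unique t3 t4)
  · -- cellB c ∈ G
    have t1 : Tendsto (fun x : S => c * x) (G : Filter S) (𝓝 c) := by
      have h := (hl c).tendsto (1 : S)
      rw [mul_one] at h
      exact h.mono_left hG1
    have t2 : Tendsto (fun x : S => inv c * (c * x)) (G : Filter S) (𝓝 (inv c * c)) :=
      ((hl (inv c)).tendsto c).comp t1
    have heq : (fun x : S => inv c * (c * x)) =ᶠ[(G : Filter S)] id := by
      filter_upwards [hmem] with x hx
      obtain ⟨r, hrΛ, rfl⟩ := hx
      show inv c * (c * negW inv (c :: r)) = negW inv (c :: r)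
      simp only [negW_cons]
      rw [← mul_assoc c, hS.gen_unit c hc, one_mul]
    have t3 : Tendsto (id : S → S) (G : Filter S) (𝓝 (inv c * c)) := t2.congr' heq
    have t4 : Tendsto (id : S → S) (G : Filter S) (𝓝 (1 : S)) := Filter.tendsto_id'.2 hG1
    exact ic_ne_one hS hc (tendsto_nhds_unique t3 t4)

lemma fiber_finite {p q : List S} (hp : LW Λ p) (hq : LW Λ q) :
    {s : S | posW p * s * negW inv q = 1}.Finite := by
  refine Set.Finite.subset (Set.Finite.image
    (fun j => negW inv (p.take (p.length - j)) * posW (q.take (q.length - j)))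
    (Set.finite_Iic p.length)) ?_
  intro s hsmem
  have hs1 : posW p * s * negW inv q = 1 := hsmem
  rcases decompose hS s with rfl | ⟨r, t, hrΛ, htΛ, rfl⟩
  · exfalso; rw [mul_zero, zero_mul] at hs1; exact hS.zero_ne_one hs1
  have key : (posW p * negW inv r) * (posW t * negW inv q) = 1 := by
    calc (posW p * negW inv r) * (posW t * negW inv q)
        = posW p * (negW inv r * posW t) * negW inv q := by simp only [mul_assoc]
      _ = 1 := hs1
  have hzero : ∀ j : ℕ, r = p.take (p.length - j) → t = q.take (q.length - j) →
      j ∈ Set.Iic p.length →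
      negW inv r * posW t ∈ (fun j => negW inv (p.take (p.length - j)) * posW (q.take (q.length - j))) ''
        (Set.Iic p.length) := by
    intro j h1 h2 hj
    refine ⟨j, hj, ?_⟩
    show negW inv (p.take (p.length - j)) * posW (q.take (q.length - j)) = negW inv r * posW t
    rw [← h1, ← h2]
  rcases dich hS p r hp hrΛ with ⟨w, hw1, hw2⟩ | ⟨w, hw1, hw2⟩ | h0
  · -- p = r ++ w
    have hwΛ : LW Λ w := (hw1 ▸ hp).of_append.2
    rcases dich hS t q htΛ hq with ⟨v, hv1, hv2⟩ | ⟨v, hv1, hv2⟩ | h0'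
    · -- t = q ++ v : posW w * posW v = posW (v ++ w) = 1
      rw [hw2, hv2, ← posW_append] at key
      have hvΛ : LW Λ v := (hv1 ▸ htΛ).of_append.2
      have hvw := pos_eq_one hS (hvΛ.append hwΛ) key
      have hv0 : v = [] := by cases v with | nil => rfl | cons a l => simp at hvw
      have hw0 : w = [] := by rw [hv0] at hvw; simpa using hvw
      refine hzero 0 ?_ ?_ (by simp)
      · rw [hw1, hw0, List.append_nil]; simp [List.take_length]
      · rw [hv1, hv0, List.append_nil]; simp [List.take_length]
    · -- q = t ++ v : posW w * negW v = 1 ⇒ w = v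
      rw [hw2, hv2] at key
      have hvΛ : LW Λ v := (hv1 ▸ hq).of_append.2
      have hwv : w = v := pn_eq_one hS hwΛ hvΛ key
      refine hzero w.length ?_ ?_ (by rw [hw1]; simp)
      · rw [hw1]; simp [List.take_left]
      · rw [hv1, hwv]; simp [List.take_left]
    · rw [hw2, h0', mul_zero] at key; exact absurd key hS.zero_ne_one
  · -- r = p ++ w
    have hwΛ : LW Λ w := (hw1 ▸ hrΛ).of_append.2
    rcases dich hS t q htΛ hq with ⟨v, hv1, hv2⟩ | ⟨v, hv1, hv2⟩ | h0'
    · rw [hw2, hv2] at key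
      have hvΛ : LW Λ v := (hv1 ▸ htΛ).of_append.2
      obtain ⟨hw0, hv0⟩ := np_eq_one' hS hwΛ hvΛ key
      refine hzero 0 ?_ ?_ (by simp)
      · rw [hw1, hw0, List.append_nil]; simp [List.take_length]
      · rw [hv1, hv0, List.append_nil]; simp [List.take_length]
    · rw [hw2, hv2, ← negW_append] at key
      have hvΛ : LW Λ v := (hv1 ▸ hq).of_append.2
      have hwv := neg_eq_one hS (hwΛ.append hvΛ) key
      have hw0 : w = [] := by cases w with | nil => rfl | cons a l => simp at hwv
      have hv0 : v = [] := by rw [hw0] at hwv; simpa using hwv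
      refine hzero 0 ?_ ?_ (by simp)
      · rw [hw1, hw0, List.append_nil]; simp [List.take_length]
      · rw [hv1, hv0, List.append_nil]; simp [List.take_length]
    · rw [hw2, h0', mul_zero] at key; exact absurd key hS.zero_ne_one
  · rw [h0, zero_mul] at key; exact absurd key hS.zero_ne_one

lemma isolated_nonzero (hΛ : Λ.Finite)
    (hl : ∀ a : S, Continuous (fun x : S => a * x))
    (hr : ∀ a : S, Continuous (fun x : S => x * a))
    {x : S} (hx : x ≠ 0) : 𝓝[≠] x = ⊥ := by
  by_contra hne
  have hNB : (𝓝[≠] x).NeBot := ⟨hne⟩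
  rcases decompose hS x with rfl | ⟨p, q, hp, hq, hform⟩
  · exact hx rfl
  set f : S → S := fun s => posW p * s * negW inv q with hfdef
  have hcont : Continuous f := by
    have : f = (fun y => y * negW inv q) ∘ (fun s => posW p * s) := rfl
    rw [this]; exact (hr (negW inv q)).comp (hl (posW p))
  have hfx : f x = 1 := by
    show posW p * x * negW inv q = 1
    rw [hform, pn' hS hp, pn hS hq]
  set Fib : Set S := {s | f s = 1} with hFib
  have hFibfin : Fib.Finite := fiber_finite hS hp hq
  have hcompl : {s : S | f s ≠ 1} ∈ 𝓝[≠] x := by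
    have h1 : ((Fib \ {x})ᶜ : Set S) ∈ 𝓝 x := by
      refine IsOpen.mem_nhds ((hFibfin.diff : (Fib \ {x}).Finite).isClosed).isOpen_compl ?_
      simp
    have h2 : ({x}ᶜ : Set S) ∈ 𝓝[≠] x := self_mem_nhdsWithin
    have h3 := Filter.inter_mem (nhdsWithin_le_nhds h1) h2
    refine Filter.mem_of_superset h3 ?_
    rintro s ⟨hs1, hs2⟩ hsFib
    exact hs1 ⟨hsFib, hs2⟩
  have htend : Tendsto f (𝓝[≠] x) (𝓝 (1 : S)) := by
    have := hcont.tendsto x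
    rw [hfx] at this
    exact this.mono_left nhdsWithin_le_nhds
  have hmap : Filter.map f (𝓝[≠] x) ≤ 𝓝[≠] (1 : S) := by
    rw [nhdsWithin]
    refine le_inf htend ?_
    rw [Filter.le_principal_iff, Filter.mem_map]
    refine Filter.mem_of_superset hcompl ?_
    intro s hs
    simpa using hs
  have : (𝓝[≠] (1 : S)).NeBot := Filter.neBot_of_le hmap
  rw [one_isolated hS hΛ hl hr] at this
  exact this.ne rfl

end PolyAux

namespace PolyAux

set_option linter.unusedSectionVars false
open Filter Topology Set

variable {S : Type*} [MonoidWithZero S] {inv : S → S} {Λ : Set S}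
variable (hS : IsPolycyclicMonoid S inv Λ)
include hS

lemma LW_replicate {c : S} (hc : c ∈ Λ) (j : ℕ) : LW Λ (List.replicate j c) := by
  intro d hd
  rw [List.eq_of_mem_replicate hd]
  exact hc

variable [TopologicalSpace S] [T2Space S]

lemma nbhd_cofinite (hΛ : Λ.Finite)
    (hl : ∀ a : S, Continuous (fun x : S => a * x))
    (hr : ∀ a : S, Continuous (fun x : S => x * a))
    {U₀ : Set S} (hUc : IsCompact U₀)
    {V : Set S} (hV : V ∈ nhds (0 : S)) : (U₀ \ V).Finite := by
  have hKc : IsCompact (U₀ ∩ (interior V)ᶜ) := hUc.inter_right isOpen_interior.isClosed_compl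
  have hiso : ∀ y ∈ U₀ ∩ (interior V)ᶜ, y ∈ interior {y} := by
    intro y hy
    have hy0 : y ≠ 0 := by
      rintro rfl
      exact hy.2 (mem_interior_iff_mem_nhds.2 hV)
    have hb := isolated_nonzero hS hΛ hl hr hy0
    have hopen : IsOpen ({y} : Set S) := (isOpen_singleton_iff_punctured_nhds y).2 hb
    rw [hopen.interior_eq]
    rfl
  obtain ⟨t, ht⟩ := hKc.elim_finite_subcover (fun y : S => interior {y})
    (fun y => isOpen_interior) (fun y hy => Set.mem_iUnion.2 ⟨y, hiso y hy⟩)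
  have hKfin : (U₀ ∩ (interior V)ᶜ).Finite := by
    refine Set.Finite.subset t.finite_toSet ?_
    intro y hy
    obtain ⟨z, hz, hyz⟩ := Set.mem_iUnion₂.1 (ht hy)
    have hyz' : y = z := by simpa using interior_subset hyz
    rw [hyz']
    exact hz
  refine hKfin.subset ?_
  rintro y ⟨hy1, hy2⟩
  exact ⟨hy1, fun hin => hy2 (interior_subset hin)⟩

lemma U0_infinite (hΛ : Λ.Finite)
    (hl : ∀ a : S, Continuous (fun x : S => a * x))
    (hr : ∀ a : S, Continuous (fun x : S => x * a))
    (hnd : ¬ DiscreteTopology S)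
    {U₀ : Set S} (hU : U₀ ∈ nhds (0 : S)) : U₀.Infinite := by
  intro hfin
  have h0 : {(0 : S)} ∈ nhds (0 : S) := by
    have hcl : IsClosed (U₀ \ {(0:S)}) := ((hfin.diff : (U₀ \ {(0:S)}).Finite)).isClosed
    have hmem : (U₀ ∩ (U₀ \ {(0:S)})ᶜ) ∈ nhds (0 : S) :=
      Filter.inter_mem hU (hcl.isOpen_compl.mem_nhds (by simp))
    refine Filter.mem_of_superset hmem ?_
    rintro y ⟨hy1, hy2⟩
    by_contra hne
    exact hy2 ⟨hy1, by simpa using hne⟩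
  have hdisc : ∀ x : S, nhds x = pure x := by
    intro x
    refine le_antisymm ?_ (pure_le_nhds x)
    rw [Filter.le_pure_iff]
    by_cases hx : x = 0
    · rw [hx]; exact h0
    · have hb := isolated_nonzero hS hΛ hl hr hx
      exact ((isOpen_singleton_iff_punctured_nhds x).2 hb).mem_nhds rfl
  exact hnd (discreteTopology_iff_nhds.2 hdisc)

lemma ae_left (hΛ : Λ.Finite)
    (hl : ∀ a : S, Continuous (fun x : S => a * x))
    (hr : ∀ a : S, Continuous (fun x : S => x * a))
    {U₀ : Set S} (hU : U₀ ∈ nhds (0 : S)) (hUc : IsCompact U₀)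
    (z : S) : {m | m ∈ U₀ ∧ z * m ∉ U₀}.Finite := by
  have hV : (fun m : S => z * m) ⁻¹' U₀ ∈ nhds (0 : S) := by
    have hten := (hl z).tendsto (0 : S)
    rw [mul_zero] at hten
    exact hten hU
  refine (nbhd_cofinite hS hΛ hl hr hUc hV).subset ?_
  rintro m ⟨hm1, hm2⟩
  exact ⟨hm1, hm2⟩

lemma ae_right (hΛ : Λ.Finite)
    (hl : ∀ a : S, Continuous (fun x : S => a * x))
    (hr : ∀ a : S, Continuous (fun x : S => x * a))
    {U₀ : Set S} (hU : U₀ ∈ nhds (0 : S)) (hUc : IsCompact U₀)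
    (z : S) : {m | m ∈ U₀ ∧ m * z ∉ U₀}.Finite := by
  have hV : (fun m : S => m * z) ⁻¹' U₀ ∈ nhds (0 : S) := by
    have hten := (hr z).tendsto (0 : S)
    rw [zero_mul] at hten
    exact hten hU
  refine (nbhd_cofinite hS hΛ hl hr hUc hV).subset ?_
  rintro m ⟨hm1, hm2⟩
  exact ⟨hm1, hm2⟩

omit hS in
lemma finite_words (hΛ : Λ.Finite) (n : ℕ) : {w : List S | LW Λ w ∧ w.length ≤ n}.Finite := by
  induction n with
  | zero =>
    refine (Set.finite_singleton ([] : List S)).subset ?_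
    rintro w ⟨hw, hlen⟩
    rw [Nat.le_zero, List.length_eq_zero_iff] at hlen
    simp [hlen]
  | succ n ih =>
    refine ((Set.finite_singleton ([] : List S)).union
      (Set.Finite.image2 List.cons hΛ ih)).subset ?_
    rintro w ⟨hw, hlen⟩
    cases w with
    | nil => exact Or.inl rfl
    | cons c w' =>
      refine Or.inr (Set.mem_image2_of_mem hw.of_cons.1 ⟨hw.of_cons.2, ?_⟩)
      simpa using hlen

lemma row_infinite (hΛ : Λ.Finite)
    (hl : ∀ a : S, Continuous (fun x : S => a * x))
    (hr : ∀ a : S, Continuous (fun x : S => x * a))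
    (hnd : ¬ DiscreteTopology S)
    {U₀ : Set S} (hU : U₀ ∈ nhds (0 : S)) (hUc : IsCompact U₀) :
    ∃ p, LW Λ p ∧ {q | LW Λ q ∧ negW inv p * posW q ∈ U₀}.Infinite := by
  classical
  by_contra hrows
  push_neg at hrows
  obtain ⟨c₀, hc₀, -, -, -⟩ := exists_pair hS
  have hFcfin : {m | m ∈ U₀ ∧ m * c₀ ∉ U₀}.Finite := ae_right hS hΛ hl hr hU hUc c₀
  set AncSet : S → Set S := fun y =>
    {m : S | ∃ p q j, LW Λ p ∧ LW Λ q ∧ m = negW inv p * posW q ∧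
      y = negW inv p * posW (List.replicate j c₀ ++ q)} with hAncdef
  have hAncfin : ∀ y : S, y ≠ 0 → (AncSet y).Finite := by
    intro y hy0
    rcases decompose hS y with rfl | ⟨py, qy, hpy, hqy, hyform⟩
    · exact absurd rfl hy0
    refine ((Set.finite_Iic qy.length).image
      (fun j => negW inv py * posW (qy.drop j))).subset ?_
    rintro m ⟨p, q, j, hp, hq, rfl, hyeq⟩
    have hrep : LW Λ (List.replicate j c₀ ++ q) := (LW_replicate hS hc₀ j).append hq
    have huniq := nf_unique hS hpy hqy hp hrep (hyform ▸ hyeq)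
    have hq' : qy.drop j = q := by
      rw [huniq.2]
      simpa using List.drop_left (List.replicate j c₀) q
    have hj : j ≤ qy.length := by
      rw [huniq.2]
      simp
    refine ⟨j, hj, ?_⟩
    show negW inv py * posW (qy.drop j) = negW inv p * posW q
    rw [hq', huniq.1]
  have hcover : U₀ ⊆ {(0:S)} ∪ ⋃ y ∈ {m | m ∈ U₀ ∧ m * c₀ ∉ U₀}, AncSet y := by
    intro m hm
    by_cases hm0 : m = 0
    · exact Or.inl (by simp [hm0])
    rcases decompose hS m with rfl | ⟨p, q, hp, hq, rfl⟩
    · exact absurd rfl hm0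
    set P : ℕ → Prop := fun j => negW inv p * posW (List.replicate j c₀ ++ q) ∉ U₀ with hPdef
    have hex : ∃ j, P j := by
      by_contra hall
      push_neg at hall
      refine Set.not_infinite.2 (hrows p hp) ?_
      refine Set.infinite_of_injective_forall_mem
        (f := fun j : ℕ => List.replicate j c₀ ++ q) ?_ ?_
      · intro j1 j2 hj
        have := congrArg List.length hj
        simpa using this
      · intro j
        exact ⟨(LW_replicate hS hc₀ j).append hq, not_not.1 (hall j)⟩
    set j0 := Nat.find hex with hj0def
    have hj0 : P j0 := Nat.find_spec hex
    have hj0ne : j0 ≠ 0 := by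
      intro h
      rw [h] at hj0
      exact hj0 (by simpa using hm)
    obtain ⟨j1, hj1eq⟩ : ∃ j1, j0 = j1 + 1 :=
      ⟨j0 - 1, (Nat.succ_pred_eq_of_ne_zero hj0ne).symm⟩
    have hj1 : ¬ P j1 := by
      apply Nat.find_min hex
      omega
    have hyU : negW inv p * posW (List.replicate j1 c₀ ++ q) ∈ U₀ := not_not.1 hj1
    have hyc : (negW inv p * posW (List.replicate j1 c₀ ++ q)) * c₀ ∉ U₀ := by
      have hstep : (negW inv p * posW (List.replicate j1 c₀ ++ q)) * c₀
          = negW inv p * posW (List.replicate (j1+1) c₀ ++ q) := by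
        rw [List.replicate_succ, List.cons_append, posW_cons, mul_assoc]
      rw [hstep]
      rw [hj1eq] at hj0
      exact fun hmem => hj0 hmem
    refine Or.inr (Set.mem_biUnion ⟨hyU, hyc⟩ ?_)
    exact ⟨p, q, j1, hp, hq, rfl, rfl⟩
  have hfin : ({(0:S)} ∪ ⋃ y ∈ {m | m ∈ U₀ ∧ m * c₀ ∉ U₀}, AncSet y).Finite := by
    refine (Set.finite_singleton _).union (hFcfin.biUnion ?_)
    intro y hy
    refine hAncfin y ?_
    rintro rfl
    refine hy.2 ?_
    rw [zero_mul]
    exact hy.1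
  exact U0_infinite hS hΛ hl hr hnd hU (hfin.subset hcover)

end PolyAux

namespace PolyAux

set_option linter.unusedSectionVars false
open Filter Topology Set

variable {S : Type*} [MonoidWithZero S] {inv : S → S} {Λ : Set S}
variable (hS : IsPolycyclicMonoid S inv Λ)
include hS
variable [TopologicalSpace S] [T2Space S]

lemma bad_finite (hΛ : Λ.Finite)
    (hl : ∀ a : S, Continuous (fun x : S => a * x))
    (hr : ∀ a : S, Continuous (fun x : S => x * a))
    (hnd : ¬ DiscreteTopology S)
    {U₀ : Set S} (hU : U₀ ∈ nhds (0 : S)) (hUc : IsCompact U₀)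
    (u : List S) (hu : LW Λ u) :
    {w | LW Λ w ∧ negW inv u * posW w ∉ U₀}.Finite := by
  classical
  obtain ⟨p₀, hp₀, hT⟩ := row_infinite hS hΛ hl hr hnd hU hUc
  by_contra hbad
  have hBAD : {w | LW Λ w ∧ negW inv u * posW w ∉ U₀}.Infinite := hbad
  -- GOOD is infinite: transfer from the infinite row p₀
  have hgood_inf : {w | LW Λ w ∧ negW inv u * posW w ∈ U₀}.Infinite := by
    have htrans : {t | (LW Λ t ∧ negW inv p₀ * posW t ∈ U₀) ∧
        negW inv u * posW t ∉ U₀}.Finite := by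
      have hz := ae_left hS hΛ hl hr hU hUc (negW inv u * posW p₀)
      refine Set.Finite.of_finite_image (f := fun t => negW inv p₀ * posW t) (hz.subset ?_) ?_
      · rintro m ⟨t, ⟨⟨ht, htU⟩, htu⟩, rfl⟩
        refine ⟨htU, ?_⟩
        have hcalc : (negW inv u * posW p₀) * (negW inv p₀ * posW t) = negW inv u * posW t := by
          rw [mul_assoc, pn' hS hp₀]
        rw [hcalc]
        exact htu
      · rintro t1 ⟨⟨ht1, -⟩, -⟩ t2 ⟨⟨ht2, -⟩, -⟩ heq
        exact (nf_unique hS hp₀ ht1 hp₀ ht2 heq).2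
    refine Set.Infinite.mono ?_ (hT.diff htrans)
    rintro t ⟨⟨ht, htU⟩, htbad⟩
    refine ⟨ht, ?_⟩
    by_contra hnot
    exact htbad ⟨⟨ht, htU⟩, hnot⟩
  -- constraint: appending a fixed word at the tail preserves goodness a.e.
  have hElam : ∀ vw : List S, LW Λ vw →
      {q | (LW Λ q ∧ negW inv u * posW q ∈ U₀) ∧
        negW inv u * posW (q ++ vw) ∉ U₀}.Finite := by
    intro vw hvw
    have hz := ae_left hS hΛ hl hr hU hUc (negW inv u * posW (u ++ vw))
    refine Set.Finite.of_finite_image (f := fun q => negW inv u * posW q) (hz.subset ?_) ?_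
    · rintro m ⟨q, ⟨⟨hq, hqU⟩, hqbad⟩, rfl⟩
      refine ⟨hqU, ?_⟩
      have hcalc : (negW inv u * posW (u ++ vw)) * (negW inv u * posW q)
          = negW inv u * posW (q ++ vw) := by
        calc (negW inv u * posW (u ++ vw)) * (negW inv u * posW q)
            = negW inv u * (posW vw * (posW u * (negW inv u * posW q))) := by
              rw [posW_append]; simp only [mul_assoc]
          _ = negW inv u * (posW vw * posW q) := by rw [pn' hS hu]
          _ = negW inv u * posW (q ++ vw) := by rw [posW_append]
      rw [hcalc]
      exact hqbad
    · rintro q1 ⟨⟨hq1, -⟩, -⟩ q2 ⟨⟨hq2, -⟩, -⟩ heq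
      exact (nf_unique hS hu hq1 hu hq2 heq).2
  -- constraint: replacing a head part r by s a.e. keeps membership
  have hEcs : ∀ r s : List S, LW Λ r → LW Λ s →
      {w | LW Λ w ∧ (negW inv u * posW (r ++ w) ∈ U₀) ∧
        negW inv u * posW (s ++ w) ∉ U₀}.Finite := by
    intro r s hrΛ hsΛ
    have hz := ae_right hS hΛ hl hr hU hUc (negW inv r * posW s)
    refine Set.Finite.of_finite_image (f := fun w => negW inv u * posW (r ++ w)) (hz.subset ?_) ?_
    · rintro m ⟨w, ⟨hw, hwU, hwbad⟩, rfl⟩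
      refine ⟨hwU, ?_⟩
      have hcalc : (negW inv u * posW (r ++ w)) * (negW inv r * posW s)
          = negW inv u * posW (s ++ w) := by
        calc (negW inv u * posW (r ++ w)) * (negW inv r * posW s)
            = negW inv u * (posW w * (posW r * (negW inv r * posW s))) := by
              rw [posW_append]; simp only [mul_assoc]
          _ = negW inv u * (posW w * posW s) := by rw [pn' hS hrΛ]
          _ = negW inv u * posW (s ++ w) := by rw [posW_append]
      rw [hcalc]
      exact hwbad
    · rintro w1 ⟨hw1, -, -⟩ w2 ⟨hw2, -, -⟩ heq
      have := (nf_unique hS hu (hrΛ.append hw1) hu (hrΛ.append hw2) heq).2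
      exact List.append_cancel_left this
  -- finite exceptional set for one-letter extensions, with a length bound L
  set BndSet : Set (List S) := {q | (LW Λ q ∧ negW inv u * posW q ∈ U₀) ∧
      ∃ c ∈ Λ, negW inv u * posW (q ++ [c]) ∉ U₀} with hBndDef
  have hBnd : BndSet.Finite := by
    refine (hΛ.biUnion (fun c (hc : c ∈ Λ) =>
      hElam [c] (LW.cons hc LW.nil))).subset ?_
    rintro q ⟨⟨hq, hqU⟩, c, hc, hqbad⟩
    exact Set.mem_biUnion hc ⟨⟨hq, hqU⟩, hqbad⟩
  obtain ⟨L, hL⟩ : ∃ L : ℕ, ∀ q ∈ BndSet, q.length ≤ L := by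
    obtain ⟨L, hL⟩ := (hBnd.image List.length).bddAbove
    exact ⟨L, fun q hq => hL (Set.mem_image_of_mem _ hq)⟩
  -- pick a good word longer than L
  obtain ⟨g, ⟨hg, hgU⟩, hglen⟩ :=
    (hgood_inf.diff (finite_words hΛ L)).nonempty
  have hglen' : L < g.length := by
    by_contra h
    push_neg at h
    exact hglen ⟨hg, h⟩
  -- pick a bad word outside the exceptional set for prefixing g
  obtain ⟨w, ⟨hw, hwbad⟩, hwnot⟩ :=
    (hBAD.diff (hEcs g [] hg LW.nil)).nonempty
  have hgw_bad : negW inv u * posW (g ++ w) ∉ U₀ := by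
    by_contra hmem
    exact hwnot ⟨hw, hmem, by simpa using hwbad⟩
  -- stripping lemma
  have hstrip : ∀ w' : List S, LW Λ w' → ∀ g' : List S, LW Λ g' → L < g'.length →
      negW inv u * posW (g' ++ w') ∉ U₀ → negW inv u * posW g' ∉ U₀ := by
    intro w'
    induction w' with
    | nil =>
      intro _ g' _ _ h
      simpa using h
    | cons c w'' ih =>
      intro hw' g' hg' hg'len hbadgw
      have hc := hw'.of_cons.1
      have hw'' := hw'.of_cons.2
      have hstep : negW inv u * posW ((g' ++ [c]) ++ w'') ∉ U₀ := by
        rw [← List.append_cons]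
        exact hbadgw
      have h1 : negW inv u * posW (g' ++ [c]) ∉ U₀ :=
        ih hw'' (g' ++ [c]) (hg'.append (LW.cons hc LW.nil))
          (by simp only [List.length_append, List.length_cons, List.length_nil]; omega) hstep
      by_contra hgood
      have hmem : g' ∈ BndSet := ⟨⟨hg', hgood⟩, ⟨c, hc, h1⟩⟩
      have := hL _ hmem
      omega
  exact (hstrip w hw g hg hglen' hgw_bad) hgU

end PolyAux

/-- If the generating set is finite, a compact neighborhood of zero in a
non-discrete locally compact semitopological polycyclic monoid contains all but
finitely many elements of every Green R-class. -/
theorem stmt10 {S : Type*} [MonoidWithZero S] (inv : S → S) (Λ : Set S)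
    (hS : IsPolycyclicMonoid S inv Λ) (hΛ : Λ.Finite)
    [TopologicalSpace S] [T2Space S] [LocallyCompactSpace S]
    (hl : ∀ a : S, Continuous (fun x : S => a * x))
    (hr : ∀ a : S, Continuous (fun x : S => x * a))
    (hnd : ¬ DiscreteTopology S)
    (U₀ : Set S) (hU : U₀ ∈ nhds (0 : S)) (hUc : IsCompact U₀) :
    ∀ x : S, (greenR x \ U₀).Finite := by
  intro x
  rcases PolyAux.decompose hS x with rfl | ⟨p, q, hp, hq, rfl⟩
  · refine (Set.finite_singleton (0 : S)).subset ?_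
    rintro y ⟨hy, -⟩
    exact Set.mem_singleton_iff.2 (PolyAux.green_zero hS hy)
  · refine ((PolyAux.bad_finite hS hΛ hl hr hnd hU hUc p hp).image
      (fun w => PolyAux.negW inv p * PolyAux.posW w)).subset ?_
    rintro y ⟨hy, hyU⟩
    obtain ⟨w, hw, rfl⟩ := PolyAux.green_form hS hp hq hy
    exact ⟨w, ⟨hw, hyU⟩, rfl⟩
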